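/- Let α ∈ (0,1) and θ_α := arccos α. The cone C := {(t, 0) : t ≤ 0} ∪ {t·(cos θ_α, sin θ_α) : t ≥ 0} (the union of a horizontal half-line lying on Γ with a half-line making angle θ_α with Γ) is α-sliding minimal (with n = 2, d = 1) in the half-plane ℝ²₊ with sliding boundary Γ. -/

import Mathlib

open MeasureTheory Set

noncomputable section

/-- The functional `J_α(E) = H^d(E \ Γ) + α · H^d(E ∩ Γ)`. -/
def slidingJ (n : ℕ) (d α : ℝ) (G E : Set (EuclideanSpace ℝ (Fin n))) : ENNReal :=
  μH[d] (E \ G) + ENNReal.ofReal α * μH[d] (E ∩ G)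

/-- `F` is a sliding competitor of `E` in `Ω` with sliding boundary `G`:
`F = φ₁(E)` for a continuous one-parameter family `φ : [0,1] × E → Ω` with `φ₀ = id`,
`φ₁` Lipschitz, preserving `G`, and whose moving part is confined to a compact set. -/
def IsSlidingCompetitor (n : ℕ) (Ω G E F : Set (EuclideanSpace ℝ (Fin n))) : Prop :=
  ∃ φ : ℝ → EuclideanSpace ℝ (Fin n) → EuclideanSpace ℝ (Fin n),
    ContinuousOn (fun q : ℝ × EuclideanSpace ℝ (Fin n) => φ q.1 q.2) (Icc (0:ℝ) 1 ×ˢ E) ∧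
    (∀ x ∈ E, φ 0 x = x) ∧
    (∃ L : NNReal, LipschitzOnWith L (φ 1) E) ∧
    (∀ t ∈ Icc (0:ℝ) 1, ∀ x ∈ E, φ t x ∈ Ω) ∧
    (∀ t ∈ Icc (0:ℝ) 1, ∀ x ∈ E ∩ G, φ t x ∈ G) ∧
    (∃ K : Set (EuclideanSpace ℝ (Fin n)), IsCompact K ∧
       ∀ t ∈ Icc (0:ℝ) 1, ∀ x ∈ E, (∃ s ∈ Icc (0:ℝ) 1, φ s x ≠ x) → φ t x ∈ K) ∧
    F = φ 1 '' E

/-- `E ⊆ Ω` is `α`-sliding minimal of dimension `d` in `Ω` with sliding boundary `G`: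
`J_α(E \ F) ≤ J_α(F \ E)` for every sliding competitor `F` of `E`. -/
def SlidingMinimal (n : ℕ) (d α : ℝ) (Ω G E : Set (EuclideanSpace ℝ (Fin n))) : Prop :=
  ∀ F : Set (EuclideanSpace ℝ (Fin n)), IsSlidingCompetitor n Ω G E F →
    slidingJ n d α G (E \ F) ≤ slidingJ n d α G (F \ E)

/-- The cone over a set: `cone(A) = {λ a : λ ≥ 0, a ∈ A}`. -/
def coneOver (n : ℕ) (A : Set (EuclideanSpace ℝ (Fin n))) : Set (EuclideanSpace ℝ (Fin n)) :=
  {x | ∃ lam : ℝ, 0 ≤ lam ∧ ∃ a ∈ A, x = lam • a}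

/-- The point of `ℝ²` with coordinates `(a, b)`. -/
def e2 (a b : ℝ) : EuclideanSpace ℝ (Fin 2) := (EuclideanSpace.equiv (Fin 2) ℝ).symm ![a, b]

/-- The sliding boundary `Γ = {y = 0}` of the half-plane. -/
def Gamma2 : Set (EuclideanSpace ℝ (Fin 2)) := {x | x 1 = 0}

/-- The closed upper half-plane `ℝ²₊ = {y ≥ 0}`. -/
def halfPlane : Set (EuclideanSpace ℝ (Fin 2)) := {x | 0 ≤ x 1}

/-- The vertical half-line `P = {(0, t) : t ≥ 0}`. -/
def vertHalfLine : Set (EuclideanSpace ℝ (Fin 2)) := {p | ∃ t : ℝ, 0 ≤ t ∧ p = e2 0 t}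

/-- The cone of type (iv): the union of the half-line `{(t,0) : t ≤ 0}` lying on `Γ`
with the half-line from the origin making angle `θ_α = arccos α` with `Γ`. -/
def Dcone (α : ℝ) : Set (EuclideanSpace ℝ (Fin 2)) :=
  {p | ∃ t : ℝ, t ≤ 0 ∧ p = e2 t 0} ∪
  {p | ∃ t : ℝ, 0 ≤ t ∧ p = t • e2 (Real.cos (Real.arccos α)) (Real.sin (Real.arccos α))}

/-- The cone `V_θ`: two half-lines from the origin, symmetric with respect to the
vertical axis, each making angle `θ` with `Γ`. -/
def Vcone (θ : ℝ) : Set (EuclideanSpace ℝ (Fin 2)) :=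
  {p | ∃ t : ℝ, 0 ≤ t ∧ p = t • e2 (Real.cos θ) (Real.sin θ)} ∪
  {p | ∃ t : ℝ, 0 ≤ t ∧ p = t • e2 (-Real.cos θ) (Real.sin θ)}

/-- The reflection `(x, y) ↦ (−x, y)`. -/
def refl2 (p : EuclideanSpace ℝ (Fin 2)) : EuclideanSpace ℝ (Fin 2) :=
  e2 (-(p 0)) (p 1)

/-!
Calibration argument. Let `u = (cos θ_α, sin θ_α) = (α, √(1 - α²))` and `ℓ = ⟪u, ·⟫`.
Then `ℓ` is `1`-Lipschitz, and `α`-Lipschitz on `Γ`, so `H¹(ℓ(S)) ≤ J_α(S)` for every `S`.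
A competitor `F` is connected and coincides with the cone outside a ball `B_R`, so `ℓ(F)` is an
interval containing `ℓ(-R, 0) = -αR` and `ℓ(R u) = R`; since `ℓ < -αR` or `ℓ > R` on the cone
outside `B_R`, the interval `[-αR, R]` is already covered by `ℓ(F ∩ B_R)`. Its length `R + αR`
is `J_α(C ∩ B_R)`, hence `J_α(C ∩ B_R) ≤ J_α(F ∩ B_R)`, and removing the common part
`C ∩ F ∩ B_R` leaves `J_α(C \ F) ≤ J_α(F \ C)`.
-/

open Metric

namespace IsSlidingCompetitor

variable {n : ℕ} {Ω G E F : Set (EuclideanSpace ℝ (Fin n))}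

theorem exists_isCompact_diff_subset (hF : IsSlidingCompetitor n Ω G E F) :
    ∃ K, IsCompact K ∧ E \ F ⊆ K ∧ F \ E ⊆ K := by
  obtain ⟨φ, -, hφ₀, -, -, -, ⟨K, hK, hKmove⟩, rfl⟩ := hF
  have h₀ : (0 : ℝ) ∈ Icc (0 : ℝ) 1 := left_mem_Icc.2 zero_le_one
  have h₁ : (1 : ℝ) ∈ Icc (0 : ℝ) 1 := right_mem_Icc.2 zero_le_one
  refine ⟨K, hK, ?_, ?_⟩
  · rintro x ⟨hxE, hxF⟩
    have hmoves : φ 1 x ≠ x := fun h => hxF ⟨x, hxE, h⟩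
    simpa [hφ₀ x hxE] using hKmove 0 h₀ x hxE ⟨1, h₁, hmoves⟩
  · rintro _ ⟨⟨x, hxE, rfl⟩, hxE'⟩
    exact hKmove 1 h₁ x hxE ⟨1, h₁, fun h => hxE' (by rwa [h])⟩

theorem isConnected (hF : IsSlidingCompetitor n Ω G E F) (hE : IsConnected E) :
    IsConnected F := by
  obtain ⟨φ, -, -, ⟨L, hφ⟩, -, -, -, rfl⟩ := hF
  exact hE.image _ hφ.continuousOn

theorem measurableSet (hF : IsSlidingCompetitor n Ω G E F) (hE : IsClosed E) :
    MeasurableSet F := by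
  obtain ⟨φ, -, -, ⟨L, hφ⟩, -, -, -, rfl⟩ := hF
  have hE' : IsSigmaCompact E := isSigmaCompact_univ.of_isClosed_subset hE (subset_univ E)
  obtain ⟨K, hK, hKF⟩ := hE'.image_of_continuousOn hφ.continuousOn
  exact hKF ▸ MeasurableSet.iUnion fun i => (hK i).measurableSet

end IsSlidingCompetitor

section SlidingJ

variable {n : ℕ} {d α : ℝ} {G : Set (EuclideanSpace ℝ (Fin n))}

theorem slidingJ_mono {A B : Set (EuclideanSpace ℝ (Fin n))} (h : A ⊆ B) :
    slidingJ n d α G A ≤ slidingJ n d α G B :=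
  add_le_add (measure_mono (sdiff_subset_sdiff_left h))
    (mul_le_mul_right (measure_mono (inter_subset_inter_left G h)) _)

theorem slidingJ_union_le (A B : Set (EuclideanSpace ℝ (Fin n))) :
    slidingJ n d α G (A ∪ B) ≤ slidingJ n d α G A + slidingJ n d α G B := by
  unfold slidingJ
  rw [union_sdiff_distrib, union_inter_distrib_right]
  calc _ ≤ (μH[d] (A \ G) + μH[d] (B \ G)) +
        ENNReal.ofReal α * (μH[d] (A ∩ G) + μH[d] (B ∩ G)) :=
        add_le_add (measure_union_le _ _) (mul_le_mul_right (measure_union_le _ _) _)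
    _ = _ := by ring

theorem slidingJ_inter_add_diff (A : Set (EuclideanSpace ℝ (Fin n)))
    {T : Set (EuclideanSpace ℝ (Fin n))} (hT : MeasurableSet T) :
    slidingJ n d α G (A ∩ T) + slidingJ n d α G (A \ T) = slidingJ n d α G A := by
  unfold slidingJ
  rw [sdiff_inter_right_comm A T G, inter_right_comm A T G, ← sdiff_inter_right_comm A G T,
    sdiff_sdiff_comm, ← measure_inter_add_sdiff (A \ G) hT,
    ← measure_inter_add_sdiff (A ∩ G) hT]
  ring

theorem slidingJ_diff_le_of_le_inter {E F B : Set (EuclideanSpace ℝ (Fin n))}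
    (hF : MeasurableSet F) (hB : E \ F ⊆ B) (hfin : slidingJ n d α G (E ∩ B) ≠ ⊤)
    (hle : slidingJ n d α G (E ∩ B) ≤ slidingJ n d α G (F ∩ B)) :
    slidingJ n d α G (E \ F) ≤ slidingJ n d α G (F \ E) := by
  have hsplit : slidingJ n d α G (E ∩ B ∩ F) + slidingJ n d α G (E \ F) =
      slidingJ n d α G (E ∩ B) := by
    rw [← slidingJ_inter_add_diff (E ∩ B) hF, inter_sdiff_right_comm, inter_eq_left.2 hB]
  have hcover : F ∩ B ⊆ (E ∩ B ∩ F) ∪ (F \ E) := fun y ⟨hyF, hyB⟩ =>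
    (em (y ∈ E)).imp (fun hyE => ⟨⟨hyE, hyB⟩, hyF⟩) (fun hyE => ⟨hyF, hyE⟩)
  have hfin' : slidingJ n d α G (E ∩ B ∩ F) ≠ ⊤ :=
    ne_top_of_le_ne_top hfin (slidingJ_mono inter_subset_left)
  refine (ENNReal.add_le_add_iff_left hfin').1 ?_
  calc _ = slidingJ n d α G (E ∩ B) := hsplit
    _ ≤ slidingJ n d α G (F ∩ B) := hle
    _ ≤ _ := (slidingJ_mono hcover).trans (slidingJ_union_le _ _)

end SlidingJ

theorem hausdorffMeasure_one_image_le_slidingJ {n : ℕ} {α : ℝ}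
    {G : Set (EuclideanSpace ℝ (Fin n))}
    {Y : Type*} [EMetricSpace Y] [MeasurableSpace Y] [BorelSpace Y]
    {f : EuclideanSpace ℝ (Fin n) → Y} (hf : LipschitzWith 1 f)
    (hfG : LipschitzOnWith α.toNNReal f G) (S : Set (EuclideanSpace ℝ (Fin n))) :
    μH[1] (f '' S) ≤ slidingJ n 1 α G S := by
  rw [← sdiff_union_inter S G, image_union]
  refine (measure_union_le _ _).trans (add_le_add ?_ ?_)
  · simpa using hf.hausdorffMeasure_image_le zero_le_one (S \ G)
  · simpa [ENNReal.ofReal] using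
      (hfG.mono inter_subset_right).hausdorffMeasure_image_le zero_le_one

theorem lipschitzWith_one_inner {E : Type*} [NormedAddCommGroup E] [InnerProductSpace ℝ E]
    {v : E} (hv : ‖v‖ = 1) : LipschitzWith 1 (inner ℝ v) :=
  LipschitzWith.of_dist_le_mul fun p q => by
    simpa [dist_eq_norm, ← inner_sub_right, hv] using abs_real_inner_le_norm v (p - q)

theorem hausdorffMeasure_one_image_smul_right {E : Type*} [NormedAddCommGroup E] [NormedSpace ℝ E]
    [MeasurableSpace E] [BorelSpace E] {v : E} (hv : ‖v‖ = 1) (S : Set ℝ) :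
    μH[1] ((· • v) '' S) = volume S := by
  rw [hausdorffMeasure_smul_right_image, hausdorffMeasure_real,
    show ‖v‖₊ = 1 from Subtype.ext hv, one_smul]

def slantDir (α : ℝ) : EuclideanSpace ℝ (Fin 2) :=
  e2 (Real.cos (Real.arccos α)) (Real.sin (Real.arccos α))

section Cone

variable {α : ℝ}

@[simp] theorem e2_apply_zero (a b : ℝ) : e2 a b 0 = a := rfl

@[simp] theorem e2_apply_one (a b : ℝ) : e2 a b 1 = b := rfl

theorem norm_e2 (a b : ℝ) : ‖e2 a b‖ = √(a ^ 2 + b ^ 2) := by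
  simp [EuclideanSpace.norm_eq, Fin.sum_univ_two]

theorem inner_e2 (a b c d : ℝ) : inner ℝ (e2 a b) (e2 c d) = a * c + b * d := by
  simp only [PiLp.inner_apply, RCLike.inner_apply, Real.ringHom_apply, Fin.sum_univ_two,
    e2_apply_zero, e2_apply_one]
  ring

theorem norm_e2_one_zero : ‖e2 1 0‖ = 1 := by simp [norm_e2]

theorem norm_slantDir (α : ℝ) : ‖slantDir α‖ = 1 := by
  simp [slantDir, norm_e2]

theorem eq_smul_e2_of_mem_Gamma2 {p : EuclideanSpace ℝ (Fin 2)} (hp : p ∈ Gamma2) :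
    p = p 0 • e2 1 0 := by
  ext i; fin_cases i <;> simp [show p 1 = 0 from hp]

theorem smul_e2_one_zero (t : ℝ) : t • e2 1 0 = e2 t 0 := by
  ext i; fin_cases i <;> simp

theorem Dcone_eq (α : ℝ) :
    Dcone α = (· • e2 1 0) '' Iic (0 : ℝ) ∪ (· • slantDir α) '' Ici (0 : ℝ) := by
  ext p
  simp only [Dcone, slantDir, mem_union, mem_ofPred_eq, mem_image, mem_Iic, mem_Ici,
    smul_e2_one_zero]
  exact or_congr (exists_congr fun _ => and_congr_right fun _ => eq_comm)
    (exists_congr fun _ => and_congr_right fun _ => eq_comm)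

theorem isClosed_Dcone (α : ℝ) : IsClosed (Dcone α) := by
  rw [Dcone_eq]
  exact (isClosedMap_smul_left _ _ isClosed_Iic).union (isClosedMap_smul_left _ _ isClosed_Ici)

theorem isConnected_Dcone (α : ℝ) : IsConnected (Dcone α) := by
  rw [Dcone_eq]
  refine IsConnected.union
    ⟨0, ⟨0, self_mem_Iic, zero_smul ℝ _⟩, ⟨0, self_mem_Ici, zero_smul ℝ _⟩⟩
    (isConnected_Iic.image _ (continuous_id.smul continuous_const).continuousOn)
    (isConnected_Ici.image _ (continuous_id.smul continuous_const).continuousOn)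

theorem inner_slantDir_smul_e2_one_zero (hα : α ∈ Icc (-1) 1) (t : ℝ) :
    inner ℝ (slantDir α) (t • e2 1 0) = α * t := by
  rw [inner_smul_right, slantDir, inner_e2, Real.cos_arccos hα.1 hα.2]
  ring

theorem inner_slantDir_smul_slantDir (α t : ℝ) :
    inner ℝ (slantDir α) (t • slantDir α) = t := by
  rw [inner_smul_right, real_inner_self_eq_norm_sq, norm_slantDir, one_pow, mul_one]

theorem lipschitzOnWith_inner_slantDir_Gamma2 (hα : α ∈ Icc 0 1) :
    LipschitzOnWith α.toNNReal (inner ℝ (slantDir α)) Gamma2 :=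
  LipschitzOnWith.of_dist_le_mul fun p hp q hq => by
    have hpq : p - q = (p 0 - q 0) • e2 1 0 := by
      rw [eq_smul_e2_of_mem_Gamma2 hp, eq_smul_e2_of_mem_Gamma2 hq, sub_smul]
      simp
    rw [Real.dist_eq, dist_eq_norm, ← inner_sub_right, hpq,
      inner_slantDir_smul_e2_one_zero ⟨by linarith [hα.1], hα.2⟩, norm_smul, norm_e2_one_zero,
      mul_one, Real.norm_eq_abs, abs_mul, abs_of_nonneg hα.1, Real.coe_toNNReal α hα.1]

theorem sin_arccos_pos (hα : α ∈ Ioo (-1) 1) : 0 < Real.sin (Real.arccos α) :=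
  Real.sin_pos_of_pos_of_lt_pi (Real.arccos_pos.2 hα.2) (Real.arccos_lt_pi.2 hα.1)

theorem slidingJ_Dcone_inter_closedBall_le (hα : α ∈ Ioo (-1) 1) (R : ℝ) :
    slidingJ 2 1 α Gamma2 (Dcone α ∩ closedBall 0 R) ≤
      ENNReal.ofReal R + ENNReal.ofReal α * ENNReal.ofReal R := by
  have hoff :
      (Dcone α ∩ closedBall 0 R) \ Gamma2 ⊆ (· • slantDir α) '' Icc (0 : ℝ) R := by
    rintro p ⟨⟨hpD, hpR⟩, hpΓ⟩
    rw [Dcone_eq] at hpD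
    rcases hpD with ⟨t, -, rfl⟩ | ⟨t, ht, rfl⟩
    · exact absurd (by simp [Gamma2]) hpΓ
    · rw [mem_closedBall_zero_iff, norm_smul, norm_slantDir, mul_one,
        Real.norm_of_nonneg ht] at hpR
      exact ⟨t, ⟨ht, hpR⟩, rfl⟩
  have hon : Dcone α ∩ closedBall 0 R ∩ Gamma2 ⊆ (· • e2 1 0) '' Icc (-R) 0 := by
    rintro p ⟨⟨hpD, hpR⟩, hpΓ⟩
    rw [Dcone_eq] at hpD
    rcases hpD with ⟨t, ht, rfl⟩ | ⟨t, -, rfl⟩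
    · rw [mem_closedBall_zero_iff, norm_smul, norm_e2_one_zero, mul_one,
        Real.norm_of_nonpos ht] at hpR
      exact ⟨t, ⟨by linarith, ht⟩, rfl⟩
    · have ht : t = 0 := by
        have : t * Real.sin (Real.arccos α) = 0 := hpΓ
        exact (mul_eq_zero.1 this).resolve_right (sin_arccos_pos hα).ne'
      exact ⟨0, ⟨neg_nonpos.2 (nonempty_closedBall.1 ⟨_, hpR⟩), le_rfl⟩, by simp [ht]⟩
  calc slidingJ 2 1 α Gamma2 (Dcone α ∩ closedBall 0 R)
      ≤ μH[1] ((· • slantDir α) '' Icc (0 : ℝ) R) +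
          ENNReal.ofReal α * μH[1] ((· • e2 1 0) '' Icc (-R) 0) :=
        add_le_add (measure_mono hoff) (mul_le_mul_right (measure_mono hon) _)
    _ = _ := by
      rw [hausdorffMeasure_one_image_smul_right (norm_slantDir α),
        hausdorffMeasure_one_image_smul_right norm_e2_one_zero, Real.volume_Icc, Real.volume_Icc,
        sub_zero, zero_sub, neg_neg]

theorem inner_slantDir_notMem_Icc_of_mem_Dcone (hα : α ∈ Ioc 0 1) {R : ℝ}
    {p : EuclideanSpace ℝ (Fin 2)} (hp : p ∈ Dcone α) (hpR : R < ‖p‖) :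
    inner ℝ (slantDir α) p ∉ Icc (-(α * R)) R := by
  rw [Dcone_eq] at hp
  rcases hp with ⟨t, ht, rfl⟩ | ⟨t, ht, rfl⟩
  · rw [norm_smul, norm_e2_one_zero, mul_one, Real.norm_of_nonpos ht] at hpR
    rw [inner_slantDir_smul_e2_one_zero ⟨by linarith [hα.1], hα.2⟩]
    exact fun h => by nlinarith [h.1, hα.1]
  · rw [norm_smul, norm_slantDir, mul_one, Real.norm_of_nonneg ht] at hpR
    rw [inner_slantDir_smul_slantDir]
    exact fun h => by linarith [h.2]

theorem Icc_subset_image_inner_slantDir (hα : α ∈ Ioc 0 1) {R : ℝ} (hR : 0 ≤ R)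
    {F : Set (EuclideanSpace ℝ (Fin 2))} (hF : IsPreconnected F)
    (hsphere : Dcone α ∩ sphere 0 R ⊆ F) (hout : F \ closedBall 0 R ⊆ Dcone α) :
    Icc (-(α * R)) R ⊆ inner ℝ (slantDir α) '' (F ∩ closedBall 0 R) := by
  have ha : (-R) • e2 1 0 ∈ F := hsphere
    ⟨by rw [Dcone_eq]; exact Or.inl ⟨-R, neg_nonpos.2 hR, rfl⟩,
      by simp [norm_smul, norm_e2_one_zero, hR]⟩
  have hb : R • slantDir α ∈ F := hsphere
    ⟨by rw [Dcone_eq]; exact Or.inr ⟨R, hR, rfl⟩, by simp [norm_smul, norm_slantDir, hR]⟩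
  have hcont : Continuous (inner ℝ (slantDir α)) := continuous_const.inner continuous_id
  intro c hc
  obtain ⟨p, hpF, rfl⟩ := (hF.image _ hcont.continuousOn).Icc_subset
    ⟨_, ha, by rw [inner_slantDir_smul_e2_one_zero ⟨by linarith [hα.1], hα.2⟩]; ring⟩
    ⟨_, hb, inner_slantDir_smul_slantDir α R⟩ hc
  refine ⟨p, ⟨hpF, not_not.1 fun hpB => ?_⟩, rfl⟩
  exact inner_slantDir_notMem_Icc_of_mem_Dcone hα (hout ⟨hpF, hpB⟩)
    (not_le.1 (mt mem_closedBall_zero_iff.2 hpB)) hc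

end Cone

/-- For `α ∈ (0,1)` and `θ_α = arccos α`, the cone consisting of the horizontal half-line
`{(t,0) : t ≤ 0}` lying on `Γ` together with the half-line making angle `θ_α` with `Γ`
is `α`-sliding minimal (n = 2, d = 1) in the half-plane `ℝ²₊` with sliding boundary `Γ`. -/
theorem Dcone_slidingMinimal (α : ℝ) (hα : α ∈ Ioo (0:ℝ) 1) :
    SlidingMinimal 2 1 α halfPlane Gamma2 (Dcone α) := by
  intro F hF
  obtain ⟨K, hK, hDF, hFD⟩ := hF.exists_isCompact_diff_subset
  obtain ⟨R, hR, hKR⟩ := hK.isBounded.subset_ball_lt 0 0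
  have hKB : K ⊆ closedBall 0 R := hKR.trans ball_subset_closedBall
  have hsphere : Dcone α ∩ sphere 0 R ⊆ F := fun p ⟨hpD, hpR⟩ => not_not.1 fun hpF =>
    (mem_ball_zero_iff.1 (hKR (hDF ⟨hpD, hpF⟩))).ne (mem_sphere_zero_iff_norm.1 hpR)
  have hJD := slidingJ_Dcone_inter_closedBall_le ⟨by linarith [hα.1], hα.2⟩ R
  refine slidingJ_diff_le_of_le_inter (hF.measurableSet (isClosed_Dcone α)) (hDF.trans hKB)
    (ne_top_of_le_ne_top (by finiteness) hJD) (hJD.trans ?_)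
  calc ENNReal.ofReal R + ENNReal.ofReal α * ENNReal.ofReal R = volume (Icc (-(α * R)) R) := by
        rw [Real.volume_Icc, sub_neg_eq_add, ENNReal.ofReal_add hR.le (mul_nonneg hα.1.le hR.le),
          ENNReal.ofReal_mul hα.1.le]
    _ ≤ volume (inner ℝ (slantDir α) '' (F ∩ closedBall 0 R)) :=
        measure_mono (Icc_subset_image_inner_slantDir ⟨hα.1, hα.2.le⟩ hR.le
          (hF.isConnected (isConnected_Dcone α)).isPreconnected hsphere
          (fun y hy => not_not.1 fun hyD => hy.2 (hKB (hFD ⟨hy.1, hyD⟩))))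
    _ ≤ slidingJ 2 1 α Gamma2 (F ∩ closedBall 0 R) := by
        rw [← hausdorffMeasure_real]
        exact hausdorffMeasure_one_image_le_slidingJ (lipschitzWith_one_inner (norm_slantDir α))
          (lipschitzOnWith_inner_slantDir_Gamma2 ⟨hα.1.le, hα.2.le⟩) _
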